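/- Let φ ∈ C_c^∞(ℝ) with supp φ ⊆ [a, b] where 0 < a < b < ∞. For every L > 1 there exists a constant C_L > 0, depending only on φ and L, such that for all μ ∈ ℝ and all δ, ε > 0 with 0 < ε ≤ δ and dist(μ, ℤ) ≥ δ, one has |∑_{k ∈ ℤ} e^{2πi μ k} φ(εk)| ≤ C_L · max(ε^{L−1}/δ^L, 1). -/

import Mathlib

open Real



noncomputable def psbdiff (ε : ℝ) (f : ℝ → ℝ) : ℝ → ℝ := fun x => f x - f (x - ε)

lemma psbdiff_contDiff {ε : ℝ} {f : ℝ → ℝ} (hf : ContDiff ℝ ((⊤:ℕ∞):WithTop ℕ∞) f) :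
    ContDiff ℝ ((⊤:ℕ∞):WithTop ℕ∞) (psbdiff ε f) :=
  hf.sub (hf.comp (contDiff_id.sub contDiff_const))

lemma psbdiff_iteratedDeriv {ε : ℝ} {f : ℝ → ℝ} (hf : ContDiff ℝ ((⊤:ℕ∞):WithTop ℕ∞) f)
    (n : ℕ) (x : ℝ) :
    iteratedDeriv n (psbdiff ε f) x = psbdiff ε (iteratedDeriv n f) x := by
  have h2 : (fun y : ℝ => f (y - ε)) = fun y : ℝ => f (y + (-ε)) := by
    funext y; rw [sub_eq_add_neg]
  have hfs : ContDiff ℝ (n : ℕ∞) (fun y : ℝ => f (y - ε)) :=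
    (hf.of_le (by exact_mod_cast le_top)).comp (contDiff_id.sub contDiff_const)
  have key : iteratedDeriv n (f - fun y : ℝ => f (y - ε)) x
      = iteratedDeriv n f x - iteratedDeriv n (fun y : ℝ => f (y - ε)) x := by
    simp only [← iteratedDerivWithin_univ]
    exact iteratedDerivWithin_sub (Set.mem_univ x) uniqueDiffOn_univ
      ((hf.of_le (by exact_mod_cast le_top)).contDiffWithinAt) hfs.contDiffWithinAt
  have hshift : iteratedDeriv n (fun y : ℝ => f (y - ε)) x = iteratedDeriv n f (x - ε) := by
    rw [h2, iteratedDeriv_comp_add_const n f (-ε), sub_eq_add_neg]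
  have : psbdiff ε f = f - fun y : ℝ => f (y - ε) := by funext y; simp [psbdiff]
  rw [this, key, hshift]; rfl

lemma psbdiff_bound {ε M : ℝ} (hε : 0 ≤ ε) {f : ℝ → ℝ} (hf : ContDiff ℝ ((⊤:ℕ∞):WithTop ℕ∞) f)
    (hM : ∀ x, |deriv f x| ≤ M) (x : ℝ) : |psbdiff ε f x| ≤ ε * M := by
  have hdiff : ∀ y ∈ (Set.univ : Set ℝ), DifferentiableAt ℝ f y := fun y _ =>
    (hf.differentiable (by simp)).differentiableAt
  have := Convex.norm_image_sub_le_of_norm_deriv_le (f := f) hdiff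
    (fun y _ => hM y) convex_univ (Set.mem_univ (x - ε)) (Set.mem_univ x)
  have hxx : ‖x - (x - ε)‖ = ε := by
    rw [show x - (x - ε) = ε by ring, Real.norm_eq_abs, abs_of_nonneg hε]
  calc |psbdiff ε f x| = ‖f x - f (x - ε)‖ := rfl
    _ ≤ M * ‖x - (x - ε)‖ := this
    _ = ε * M := by rw [hxx, mul_comm]

lemma psbdiff_iter_bound {ε : ℝ} (hε : 0 ≤ ε) (n : ℕ) :
    ∀ (f : ℝ → ℝ), ContDiff ℝ ((⊤:ℕ∞):WithTop ℕ∞) f → ∀ M : ℝ,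
    (∀ x, |iteratedDeriv n f x| ≤ M) →
    ∀ x, |(psbdiff ε)^[n] f x| ≤ ε ^ n * M := by
  induction n with
  | zero => intro f hf M hM x; simpa using hM x
  | succ n ih =>
    intro f hf M hM x
    rw [Function.iterate_succ_apply]
    have hb : ∀ y, |iteratedDeriv n (psbdiff ε f) y| ≤ ε * M := by
      intro y
      rw [psbdiff_iteratedDeriv hf n y]
      refine psbdiff_bound hε ?_ ?_ y
      · rw [iteratedDeriv_eq_iterate]
        exact hf.iterate_deriv n
      · intro z
        rw [← iteratedDeriv_succ]
        exact hM z
    have := ih (psbdiff ε f) (psbdiff_contDiff hf) (ε * M) hb x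
    calc |(psbdiff ε)^[n] (psbdiff ε f) x| ≤ ε ^ n * (ε * M) := this
      _ = ε ^ (n+1) * M := by ring

lemma psbdiff_support {ε a b : ℝ} (hε : 0 ≤ ε) {f : ℝ → ℝ}
    (h : Function.support f ⊆ Set.Icc a b) :
    Function.support (psbdiff ε f) ⊆ Set.Icc a (b + ε) := by
  intro x hx
  simp only [Function.mem_support, psbdiff] at hx
  by_cases h1 : f x = 0
  · have h2 : f (x - ε) ≠ 0 := by intro h2; exact hx (by rw [h1, h2, sub_zero])
    have := h (Function.mem_support.2 h2)
    constructor <;> [linarith [this.1]; linarith [this.2]]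
  · have := h (Function.mem_support.2 h1)
    constructor <;> [linarith [this.1]; linarith [this.2]]

lemma psbdiff_iter_support {ε a : ℝ} (hε : 0 ≤ ε) (n : ℕ) :
    ∀ (b : ℝ) (f : ℝ → ℝ), Function.support f ⊆ Set.Icc a b →
    Function.support ((psbdiff ε)^[n] f) ⊆ Set.Icc a (b + n * ε) := by
  induction n with
  | zero => intro b f h; simpa using h
  | succ n ih =>
    intro b f h
    rw [Function.iterate_succ_apply]
    have := ih (b + ε) (psbdiff ε f) (psbdiff_support hε h)
    have heq : b + ε + n * ε = b + (n+1) * ε := by ring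
    rw [heq] at this
    exact_mod_cast this

lemma ps_norm_one_sub_exp {μ δ : ℝ} (hδ : 0 < δ) (h : ∀ m : ℤ, δ ≤ |μ - m|) :
    4 * δ ≤ ‖1 - Complex.exp (2 * Real.pi * Complex.I * μ)‖ := by
  set m : ℤ := round μ
  set t : ℝ := μ - m with ht
  have htδ : δ ≤ |t| := h m
  have ht2 : |t| ≤ 1 / 2 := abs_sub_round μ
  have hsin_t : 2 * δ ≤ |Real.sin (Real.pi * t)| := by
    have h1 : |Real.pi * t| ≤ Real.pi / 2 := by
      rw [abs_mul, abs_of_nonneg Real.pi_pos.le]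
      calc Real.pi * |t| ≤ Real.pi * (1/2) :=
            mul_le_mul_of_nonneg_left ht2 Real.pi_pos.le
        _ = Real.pi / 2 := by ring
    have h2 := Real.mul_abs_le_abs_sin h1
    have h3 : 2 / Real.pi * |Real.pi * t| = 2 * |t| := by
      rw [abs_mul, abs_of_nonneg Real.pi_pos.le]
      field_simp
    rw [h3] at h2
    calc 2 * δ ≤ 2 * |t| := by linarith
      _ ≤ |Real.sin (Real.pi * t)| := h2
  have hμt : Real.sin (Real.pi * μ) ^ 2 = Real.sin (Real.pi * t) ^ 2 := by
    have heq : Real.pi * μ = Real.pi * t + m * Real.pi := by rw [ht]; ring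
    have hsq : ((-1 : ℝ) ^ m) ^ 2 = 1 := by
      rw [sq, ← zpow_add₀ (by norm_num : (-1:ℝ) ≠ 0)]
      exact Even.neg_one_zpow ⟨m, rfl⟩
    rw [heq, Real.sin_add_int_mul_pi, mul_pow, hsq, one_mul]
  have hsinsq : 4 * δ ^ 2 ≤ Real.sin (Real.pi * μ) ^ 2 := by
    rw [hμt]
    have := abs_nonneg (Real.sin (Real.pi * t))
    nlinarith [sq_abs (Real.sin (Real.pi * t))]
  -- compute the norm
  set z := Complex.exp (2 * Real.pi * Complex.I * μ) with hz
  have hzeq : z = Complex.exp ((2 * Real.pi * μ : ℝ) * Complex.I) := by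
    rw [hz]; congr 1; push_cast; ring
  have hre : (1 - z).re = 1 - Real.cos (2 * Real.pi * μ) := by
    rw [Complex.sub_re, hzeq, Complex.exp_ofReal_mul_I_re]
    norm_num
  have him : (1 - z).im = - Real.sin (2 * Real.pi * μ) := by
    rw [Complex.sub_im, hzeq, Complex.exp_ofReal_mul_I_im]
    norm_num
  have hnsq : ‖1 - z‖ ^ 2 = (1 - Real.cos (2 * Real.pi * μ)) ^ 2
      + Real.sin (2 * Real.pi * μ) ^ 2 := by
    rw [← Complex.normSq_eq_norm_sq]
    rw [Complex.normSq_apply, hre, him]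
    ring
  have hcos2 : Real.cos (2 * Real.pi * μ) = 1 - 2 * Real.sin (Real.pi * μ) ^ 2 := by
    have : 2 * Real.pi * μ = 2 * (Real.pi * μ) := by ring
    rw [this, Real.cos_two_mul]
    nlinarith [Real.sin_sq_add_cos_sq (Real.pi * μ)]
  have hbound : (4 * δ) ^ 2 ≤ ‖1 - z‖ ^ 2 := by
    rw [hnsq]
    nlinarith [Real.sin_sq_add_cos_sq (2 * Real.pi * μ), hcos2, hsinsq,
      Real.sin_sq_add_cos_sq (Real.pi * μ)]
  nlinarith [norm_nonneg (1 - z), hδ]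

lemma ps_hcs_iteratedDeriv {f : ℝ → ℝ} (hf : HasCompactSupport f) (n : ℕ) :
    HasCompactSupport (iteratedDeriv n f) := by
  rw [iteratedDeriv_eq_iterate]
  induction n with
  | zero => simpa
  | succ n ih => rw [Function.iterate_succ_apply']; exact ih.deriv

lemma ps_rpow_step {ε δ L : ℝ} {n : ℕ} (hε : 0 < ε) (hεδ : ε ≤ δ) (hL1 : 1 ≤ L)
    (hLn : L ≤ n) (hq : 1 ≤ n) : (ε ^ (n-1 : ℕ) / δ ^ n : ℝ) ≤ ε ^ (L-1) / δ ^ L := by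
  have hδ0 : 0 < δ := lt_of_lt_of_le hε hεδ
  have e1 : (ε : ℝ) ^ (n-1 : ℕ) = ε ^ ((n:ℝ) - 1) := by
    rw [← Real.rpow_natCast ε (n-1), Nat.cast_sub hq, Nat.cast_one]
  have e2 : (δ : ℝ) ^ n = δ ^ ((n:ℝ)) := by rw [← Real.rpow_natCast δ n]
  rw [e1, e2]
  have s1 : ε ^ ((n:ℝ) - 1) = ε ^ (L - 1) * ε ^ ((n:ℝ) - L) := by
    rw [← Real.rpow_add hε]; ring_nf
  have s2 : δ ^ ((n:ℝ)) = δ ^ L * δ ^ ((n:ℝ) - L) := by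
    rw [← Real.rpow_add hδ0]; ring_nf
  rw [s1, s2]
  have hfrac : ε ^ ((n:ℝ) - L) / δ ^ ((n:ℝ) - L) ≤ 1 := by
    rw [← Real.div_rpow hε.le hδ0.le]
    exact Real.rpow_le_one (div_nonneg hε.le hδ0.le)
      ((div_le_one hδ0).2 hεδ) (sub_nonneg.2 hLn)
  have h1 : ε ^ (L - 1) * ε ^ ((n:ℝ) - L) / (δ ^ L * δ ^ ((n:ℝ) - L))
      = (ε ^ (L - 1) / δ ^ L) * (ε ^ ((n:ℝ) - L) / δ ^ ((n:ℝ) - L)) := by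
    field_simp
  rw [h1]
  have h2 : (0:ℝ) ≤ ε ^ (L - 1) / δ ^ L := by positivity
  calc (ε ^ (L - 1) / δ ^ L) * (ε ^ ((n:ℝ) - L) / δ ^ ((n:ℝ) - L))
      ≤ (ε ^ (L - 1) / δ ^ L) * 1 := mul_le_mul_of_nonneg_left hfrac h2
    _ = ε ^ (L - 1) / δ ^ L := mul_one _

/-- Poisson-summation estimate: for a smooth cut-off `φ` supported in `[a,b]`, `0 < a < b`,
and any `L > 1`, there is `C_L > 0` such that for all `μ ∈ ℝ` and `0 < ε ≤ δ` with
`dist(μ, ℤ) ≥ δ`, one has `|∑_{k∈ℤ} e^{2πiμk} φ(εk)| ≤ C_L max(ε^{L−1}/δ^L, 1)`. -/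
theorem poisson_sum_estimate (a b : ℝ) (ha : 0 < a) (hab : a < b)
    (φ : ℝ → ℝ) (hφ : ContDiff ℝ (⊤ : ℕ∞) φ) (hsupp : Function.support φ ⊆ Set.Icc a b)
    (L : ℝ) (hL : 1 < L) :
    ∃ C : ℝ, 0 < C ∧ ∀ μ δ ε : ℝ, 0 < ε → ε ≤ δ →
      (∀ m : ℤ, δ ≤ |μ - m|) →
      ‖∑' k : ℤ, Complex.exp (2 * Real.pi * Complex.I * μ * k) * (φ (ε * k) : ℂ)‖
        ≤ C * max (ε ^ (L - 1) / δ ^ L) 1 := by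
  have hφ' : ContDiff ℝ ((⊤:ℕ∞):WithTop ℕ∞) φ := hφ.of_le (by simp)
  set n : ℕ := ⌈L⌉₊ with hn
  have hLn : L ≤ (n:ℝ) := Nat.le_ceil L
  have hn1 : 1 ≤ n := by
    have : (1:ℝ) < (n:ℝ) := lt_of_lt_of_le hL hLn
    exact_mod_cast this.le
  -- compact support and bound on the n-th derivative
  have hφcs : HasCompactSupport φ := by
    apply HasCompactSupport.intro (isCompact_Icc (a := a) (b := b))
    intro x hx
    by_contra h0
    exact hx (hsupp (Function.mem_support.2 h0))
  have hcsn : HasCompactSupport (iteratedDeriv n φ) := ps_hcs_iteratedDeriv hφcs n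
  obtain ⟨M, hM⟩ := hcsn.exists_bound_of_continuous
    (hφ.continuous_iteratedDeriv n ((by exact_mod_cast le_top)))
  have hM0 : 0 ≤ M := le_trans (norm_nonneg _) (hM 0)
  have hMabs : ∀ x, |iteratedDeriv n φ x| ≤ M := by
    intro x; rw [← Real.norm_eq_abs]; exact hM x
  have hba : 0 < b - a := sub_pos.2 hab
  refine ⟨(b - a + n + 1) * (M + 1) + 1, by nlinarith [Nat.cast_nonneg (α := ℝ) n], ?_⟩
  intro μ δ ε hε hεδ hdist
  have hδ : 0 < δ := lt_of_lt_of_le hε hεδ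
  have hδhalf : δ ≤ 1/2 := le_trans (hdist (round μ)) (by simpa using abs_sub_round μ)
  have hε1 : ε ≤ 1 := le_trans hεδ (by linarith)
  set z := Complex.exp (2 * Real.pi * Complex.I * μ) with hzdef
  have hz_ne : z ≠ 0 := Complex.exp_ne_zero _
  have hz_norm : ‖z‖ = 1 := by
    rw [hzdef, show (2 * (Real.pi:ℂ) * Complex.I * (μ:ℂ)) = ((2 * Real.pi * μ : ℝ):ℂ) * Complex.I
      by push_cast; ring, Complex.norm_exp_ofReal_mul_I]
  have honesub : 4 * δ ≤ ‖1 - z‖ := ps_norm_one_sub_exp hδ hdist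
  -- terms vanish off a finite set
  have hsupterm : ∀ (g : ℝ → ℝ) (B : ℝ), Function.support g ⊆ Set.Icc a B →
      ∀ k : ℤ, k ∉ Finset.Icc ⌈a/ε⌉ ⌊B/ε⌋ → z ^ k * (g (ε * k) : ℂ) = 0 := by
    intro g B hg k hk
    have hg0 : g (ε * k) = 0 := by
      by_contra h0
      have hmem := hg (Function.mem_support.2 h0)
      apply hk
      rw [Finset.mem_Icc]
      constructor
      · rw [Int.ceil_le, div_le_iff₀ hε]
        calc a ≤ ε * k := hmem.1
          _ = (k:ℝ) * ε := mul_comm _ _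
      · rw [Int.le_floor, le_div_iff₀ hε]
        calc (k:ℝ) * ε = ε * k := mul_comm _ _
          _ ≤ B := hmem.2
    rw [hg0]; simp
  have hsummable : ∀ (g : ℝ → ℝ) (B : ℝ), Function.support g ⊆ Set.Icc a B →
      Summable (fun k : ℤ => z ^ k * (g (ε * k) : ℂ)) := fun g B hg =>
    summable_of_ne_finset_zero (hsupterm g B hg)
  -- Abel summation step
  have habel : ∀ (g : ℝ → ℝ) (B : ℝ), Function.support g ⊆ Set.Icc a B →
      (1 - z) * ∑' k : ℤ, z ^ k * (g (ε * k) : ℂ)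
        = ∑' k : ℤ, z ^ k * ((g (ε * k) - g (ε * k - ε) : ℝ) : ℂ) := by
    intro g B hg
    set g' : ℝ → ℝ := fun x => g (x - ε) with hg'def
    have hg'supp : Function.support g' ⊆ Set.Icc a (B + ε) := by
      intro x hx
      have := hg (Function.mem_support.2 (by simpa [hg'def] using hx))
      constructor <;> [linarith [this.1]; linarith [this.2]]
    have hsum1 := hsummable g B hg
    have hsum2 := hsummable g' (B + ε) hg'supp
    have hre : ∑' k : ℤ, z ^ (k+1) * (g (ε * k) : ℂ) = ∑' k : ℤ, z ^ k * (g' (ε * k) : ℂ) := by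
      rw [← (Equiv.addRight (1:ℤ)).tsum_eq (fun k : ℤ => z ^ k * (g' (ε * k) : ℂ))]
      congr 1
      funext k
      simp only [Equiv.coe_addRight]
      congr 2
      rw [hg'def]
      congr 1
      push_cast
      ring
    calc (1 - z) * ∑' k : ℤ, z ^ k * (g (ε * k) : ℂ)
        = (∑' k : ℤ, z ^ k * (g (ε * k) : ℂ)) - z * ∑' k : ℤ, z ^ k * (g (ε * k) : ℂ) := by ring
      _ = (∑' k : ℤ, z ^ k * (g (ε * k) : ℂ)) - ∑' k : ℤ, z ^ (k+1) * (g (ε * k) : ℂ) := by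
          rw [← tsum_mul_left]
          exact congrArg (HSub.hSub _) (tsum_congr (fun k => by rw [zpow_add_one₀ hz_ne]; ring))
      _ = (∑' k : ℤ, z ^ k * (g (ε * k) : ℂ)) - ∑' k : ℤ, z ^ k * (g' (ε * k) : ℂ) := by
          rw [hre]
      _ = ∑' k : ℤ, (z ^ k * (g (ε * k) : ℂ) - z ^ k * (g' (ε * k) : ℂ)) :=
          (Summable.tsum_sub hsum1 hsum2).symm
      _ = ∑' k : ℤ, z ^ k * ((g (ε * k) - g (ε * k - ε) : ℝ) : ℂ) := by
          congr 1
          funext k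
          rw [hg'def]
          push_cast
          ring
  -- iterate the Abel step
  have hiter : ∀ j : ℕ, (1 - z) ^ j * (∑' k : ℤ, z ^ k * (φ (ε * k) : ℂ))
      = ∑' k : ℤ, z ^ k * (((psbdiff ε)^[j] φ) (ε * k) : ℂ) := by
    intro j
    induction j with
    | zero => simp
    | succ j ih =>
      have hsup := psbdiff_iter_support hε.le j b φ hsupp
      calc (1 - z) ^ (j+1) * (∑' k : ℤ, z ^ k * (φ (ε * k) : ℂ))
          = (1 - z) * ((1 - z) ^ j * (∑' k : ℤ, z ^ k * (φ (ε * k) : ℂ))) := by ring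
        _ = (1 - z) * ∑' k : ℤ, z ^ k * (((psbdiff ε)^[j] φ) (ε * k) : ℂ) := by rw [ih]
        _ = ∑' k : ℤ, z ^ k * ((((psbdiff ε)^[j] φ) (ε * k)
              - ((psbdiff ε)^[j] φ) (ε * k - ε) : ℝ) : ℂ) := habel _ (b + j * ε) hsup
        _ = ∑' k : ℤ, z ^ k * (((psbdiff ε)^[j+1] φ) (ε * k) : ℂ) := by
            congr 1
            funext k
            rw [Function.iterate_succ_apply']
            rfl
  -- rewrite the original sum
  have horig : (∑' k : ℤ, Complex.exp (2 * Real.pi * Complex.I * μ * k) * (φ (ε * k) : ℂ))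
      = ∑' k : ℤ, z ^ k * (φ (ε * k) : ℂ) := by
    congr 1
    funext k
    rw [show (2 * (Real.pi:ℂ) * Complex.I * (μ:ℂ) * (k:ℂ))
      = (k:ℤ) * (2 * (Real.pi:ℂ) * Complex.I * (μ:ℂ)) by push_cast; ring, Complex.exp_int_mul]
  set ψ := (psbdiff ε)^[n] φ with hψdef
  have hψsupp : Function.support ψ ⊆ Set.Icc a (b + n * ε) :=
    psbdiff_iter_support hε.le n b φ hsupp
  set s : Finset ℤ := Finset.Icc ⌈a/ε⌉ ⌊(b + n * ε)/ε⌋ with hsdef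
  have htsum_eq : ∑' k : ℤ, z ^ k * (ψ (ε * k) : ℂ) = ∑ k ∈ s, z ^ k * (ψ (ε * k) : ℂ) :=
    tsum_eq_sum (hsupterm ψ (b + n * ε) hψsupp)
  have hψbd : ∀ x, |ψ x| ≤ ε ^ n * M := psbdiff_iter_bound hε.le n φ hφ' M hMabs
  have hterm : ∀ k ∈ s, ‖z ^ k * (ψ (ε * k) : ℂ)‖ ≤ ε ^ n * M := by
    intro k _
    rw [norm_mul, norm_zpow, hz_norm, one_zpow, one_mul, Complex.norm_real, Real.norm_eq_abs]
    exact hψbd _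
  have hsumbd : ‖∑ k ∈ s, z ^ k * (ψ (ε * k) : ℂ)‖ ≤ (s.card : ℝ) * (ε ^ n * M) := by
    calc ‖∑ k ∈ s, z ^ k * (ψ (ε * k) : ℂ)‖ ≤ ∑ k ∈ s, ‖z ^ k * (ψ (ε * k) : ℂ)‖ :=
          norm_sum_le _ _
      _ ≤ s.card • (ε ^ n * M) := Finset.sum_le_card_nsmul s _ _ hterm
      _ = (s.card : ℝ) * (ε ^ n * M) := by rw [nsmul_eq_mul]
  have hcard : (s.card : ℝ) ≤ (b - a)/ε + n + 1 := by
    have h1 : s.card = (⌊(b + n * ε)/ε⌋ + 1 - ⌈a/ε⌉).toNat := Int.card_Icc _ _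
    rcases le_or_gt (⌈a/ε⌉) (⌊(b + n * ε)/ε⌋ + 1) with hle | hlt
    · have h2 : ((⌊(b + n * ε)/ε⌋ + 1 - ⌈a/ε⌉).toNat : ℝ)
          = ((⌊(b + n * ε)/ε⌋ : ℝ) + 1 - (⌈a/ε⌉ : ℝ)) := by
        have := Int.toNat_of_nonneg (sub_nonneg.2 hle)
        exact_mod_cast congrArg (Int.cast : ℤ → ℝ) this
      rw [h1, h2]
      have hf : ((⌊(b + n * ε)/ε⌋ : ℝ)) ≤ (b + n * ε)/ε := Int.floor_le _
      have hc : a/ε ≤ ((⌈a/ε⌉ : ℝ)) := Int.le_ceil _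
      have hdiv : (b + n * ε)/ε = (b - a)/ε + n + a/ε := by field_simp; ring
      linarith [hdiv ▸ hf]
    · rw [h1, Int.toNat_of_nonpos (by omega)]
      have h3 : 0 ≤ (b - a)/ε := div_nonneg hba.le hε.le
      have h4 : (0:ℝ) ≤ n := Nat.cast_nonneg n
      simp only [Nat.cast_zero]
      linarith
  -- assemble
  rw [horig]
  have h4δ : (0:ℝ) < 4 * δ := by linarith
  have hkey : ‖∑' k : ℤ, z ^ k * (φ (ε * k) : ℂ)‖ * ‖1 - z‖ ^ n
      = ‖∑' k : ℤ, z ^ k * (ψ (ε * k) : ℂ)‖ := by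
    rw [← hiter n, norm_mul, norm_pow]
    ring
  have hS1 : ‖∑' k : ℤ, z ^ k * (φ (ε * k) : ℂ)‖ * (4 * δ) ^ n
      ≤ ((b - a)/ε + n + 1) * (ε ^ n * M) := by
    calc ‖∑' k : ℤ, z ^ k * (φ (ε * k) : ℂ)‖ * (4 * δ) ^ n
        ≤ ‖∑' k : ℤ, z ^ k * (φ (ε * k) : ℂ)‖ * ‖1 - z‖ ^ n := by
          gcongr
      _ = ‖∑' k : ℤ, z ^ k * (ψ (ε * k) : ℂ)‖ := hkey
      _ = ‖∑ k ∈ s, z ^ k * (ψ (ε * k) : ℂ)‖ := by rw [htsum_eq]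
      _ ≤ (s.card : ℝ) * (ε ^ n * M) := hsumbd
      _ ≤ ((b - a)/ε + n + 1) * (ε ^ n * M) := by
          apply mul_le_mul_of_nonneg_right hcard
          positivity
  have hrw : ((b - a)/ε + n + 1) * (ε ^ n * M) = ((b - a) + (n + 1) * ε) * (ε ^ (n-1:ℕ) * M) := by
    have hne : ε ≠ 0 := hε.ne'
    have hpow : ε ^ n = ε ^ (n-1:ℕ) * ε := by
      conv_lhs => rw [show n = (n-1) + 1 from (Nat.succ_pred_eq_of_pos hn1).symm]
      rw [pow_succ]
    rw [hpow]
    field_simp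
    ring
  have hS2 : ‖∑' k : ℤ, z ^ k * (φ (ε * k) : ℂ)‖ * (4 * δ) ^ n
      ≤ ((b - a) + (n + 1)) * M * ε ^ (n-1:ℕ) := by
    rw [hrw] at hS1
    calc ‖∑' k : ℤ, z ^ k * (φ (ε * k) : ℂ)‖ * (4 * δ) ^ n
        ≤ ((b - a) + (n + 1) * ε) * (ε ^ (n-1:ℕ) * M) := hS1
      _ ≤ ((b - a) + (n + 1) * 1) * (ε ^ (n-1:ℕ) * M) := by
          gcongr
          all_goals first
            | exact hε1
            | positivity
            | linarith [Nat.cast_nonneg (α := ℝ) n]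
      _ = ((b - a) + (n + 1)) * M * ε ^ (n-1:ℕ) := by ring
  have hδn : (0:ℝ) < δ ^ n := pow_pos hδ n
  have h4δn : (0:ℝ) < (4 * δ) ^ n := pow_pos h4δ n
  have hS3 : ‖∑' k : ℤ, z ^ k * (φ (ε * k) : ℂ)‖
      ≤ ((b - a) + (n + 1)) * M * (ε ^ (n-1:ℕ) / δ ^ n) := by
    rw [← le_div_iff₀ h4δn] at hS2
    calc ‖∑' k : ℤ, z ^ k * (φ (ε * k) : ℂ)‖
        ≤ ((b - a) + (n + 1)) * M * ε ^ (n-1:ℕ) / (4 * δ) ^ n := hS2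
      _ ≤ ((b - a) + (n + 1)) * M * ε ^ (n-1:ℕ) / δ ^ n := by
          apply div_le_div_of_nonneg_left _ hδn (pow_le_pow_left₀ hδ.le (by linarith) n)
          positivity
      _ = ((b - a) + (n + 1)) * M * (ε ^ (n-1:ℕ) / δ ^ n) := by ring
  have hrpow : (ε ^ (n-1:ℕ) / δ ^ n : ℝ) ≤ ε ^ (L-1) / δ ^ L :=
    ps_rpow_step hε hεδ hL.le hLn hn1
  have hmax1 : ε ^ (L-1) / δ ^ L ≤ max (ε ^ (L-1) / δ ^ L) 1 := le_max_left _ _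
  have hmax0 : (0:ℝ) ≤ max (ε ^ (L-1) / δ ^ L) 1 := le_trans zero_le_one (le_max_right _ _)
  calc ‖∑' k : ℤ, z ^ k * (φ (ε * k) : ℂ)‖
      ≤ ((b - a) + (n + 1)) * M * (ε ^ (n-1:ℕ) / δ ^ n) := hS3
    _ ≤ ((b - a) + (n + 1)) * M * (max (ε ^ (L-1) / δ ^ L) 1) := by
        apply mul_le_mul_of_nonneg_left (le_trans hrpow hmax1)
        positivity
    _ ≤ ((b - a + n + 1) * (M + 1) + 1) * max (ε ^ (L-1) / δ ^ L) 1 := by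
        apply mul_le_mul_of_nonneg_right _ hmax0
        nlinarith [Nat.cast_nonneg (α := ℝ) n]
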